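/- Let N ≥ 1, k ≥ 2, and let Ω ⊆ ℝ^N be a nonempty connected open set of finite Lebesgue measure |Ω|. For each i = 1,…,k let F_i : ℝ → ℝ be continuous with F_i(0) = 0 and satisfying (F2) with constants A_i > 0 and μ_i; set μ* := max_{1≤i≤k} μ_i. Let u_1,…,u_k : ℝ^N → ℝ be continuously differentiable functions with u_i ≥ 0 on Ω and u_i(x)·u_j(x) = 0 for all x ∈ Ω and i ≠ j, with |∇u_i|², u_i², F_i(u_i) integrable on Ω, and suppose J_Ω(U) = −μ*·|Ω| (i.e. U achieves the global minimum of the free energy over segregated states). Then at most one index i ∈ {1,…,k} has u_i not identically zero on Ω. -/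

import Mathlib

/-!
At every point of `Ω` at most one component is nonzero, so by (F2) the potential part
`∑ᵢ (uᵢ²/2 - Fᵢ(uᵢ))` of the energy density is pointwise at least `-μ*`. Hence the density plus
`μ*` is a nonnegative function dominating `|∇uᵢ|²/2` whose integral over `Ω` vanishes; by
continuity every gradient vanishes on `Ω`, so on the connected set `Ω` each `uᵢ` is a constant,
and segregation at a single point leaves at most one of these constants nonzero.
-/

open MeasureTheory Set

lemma exists_forall_ne_eq_zero_of_mul_eq_zero {ι : Type*} [Nonempty ι] {v : ι → ℝ}
    (hv : ∀ i j, i ≠ j → v i * v j = 0) : ∃ j, ∀ i, i ≠ j → v i = 0 := by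
  by_cases hnonzero : ∃ j, v j ≠ 0
  · obtain ⟨j, hj⟩ := hnonzero
    exact ⟨j, fun i hij => (mul_eq_zero.1 (hv i j hij)).resolve_right hj⟩
  · exact ⟨Classical.arbitrary ι, fun i _ => not_not.1 fun hi => hnonzero ⟨i, hi⟩⟩

lemma neg_le_sum_half_sq_sub_of_mul_eq_zero {ι : Type*} [Fintype ι] [Nonempty ι]
    {F : ι → ℝ → ℝ} {m : ℝ} (hF0 : ∀ i, F i 0 = 0)
    (hFm : ∀ i, ∀ t : ℝ, 0 ≤ t → F i t - t ^ 2 / 2 ≤ m)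
    {v : ι → ℝ} (hv_nonneg : ∀ i, 0 ≤ v i) (hv : ∀ i j, i ≠ j → v i * v j = 0) :
    -m ≤ ∑ i, (1 / 2 * v i ^ 2 - F i (v i)) := by
  obtain ⟨j, hj⟩ := exists_forall_ne_eq_zero_of_mul_eq_zero hv
  rw [Finset.sum_eq_single_of_mem j (Finset.mem_univ j)
    fun i _ hij => by simp [hj i hij, hF0 i]]
  linarith [hFm j (v j) (hv_nonneg j)]

lemma le_sum_add_half_sq_sub_add_of_mul_eq_zero {ι : Type*} [Fintype ι] [Nonempty ι]
    {F : ι → ℝ → ℝ} {m : ℝ} (hF0 : ∀ i, F i 0 = 0)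
    (hFm : ∀ i, ∀ t : ℝ, 0 ≤ t → F i t - t ^ 2 / 2 ≤ m)
    {a v : ι → ℝ} (ha : ∀ i, 0 ≤ a i) (hv_nonneg : ∀ i, 0 ≤ v i)
    (hv : ∀ i j, i ≠ j → v i * v j = 0) (i : ι) :
    a i ≤ ∑ j, (a j + 1 / 2 * v j ^ 2 - F j (v j)) + m := by
  have hpot := neg_le_sum_half_sq_sub_of_mul_eq_zero hF0 hFm hv_nonneg hv
  have hai := Finset.single_le_sum (fun j _ => ha j) (Finset.mem_univ i)
  simp only [add_sub_assoc, Finset.sum_add_distrib]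
  linarith

lemma eqOn_zero_of_le_of_setIntegral_eq_zero {X : Type*} [TopologicalSpace X]
    [MeasurableSpace X] [OpensMeasurableSpace X] {μ : Measure X} [μ.IsOpenPosMeasure]
    {s : Set X} (hs : IsOpen s) {f g : X → ℝ} (hf : ContinuousOn f s)
    (hf_nonneg : ∀ x ∈ s, 0 ≤ f x) (hfg : ∀ x ∈ s, f x ≤ g x) (hg : IntegrableOn g s μ)
    (hg_zero : ∫ x in s, g x ∂μ = 0) : EqOn f 0 s := by
  have hg_nonneg : 0 ≤ᵐ[μ.restrict s] g := (ae_restrict_mem hs.measurableSet).mono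
    fun x hx => (hf_nonneg x hx).trans (hfg x hx)
  have hg_ae : g =ᵐ[μ.restrict s] 0 := (integral_eq_zero_iff_of_nonneg_ae hg_nonneg hg).1 hg_zero
  have hf_ae : f =ᵐ[μ.restrict s] 0 :=
    (hg_ae.and (ae_restrict_mem hs.measurableSet)).mono fun x ⟨hgx, hx⟩ =>
      le_antisymm (by simpa [hgx] using hfg x hx) (hf_nonneg x hx)
  exact Measure.eqOn_open_of_ae_eq hf_ae hs hf continuousOn_const

theorem stmt_1_general
    {N k : ℕ}
    (Ω : Set (EuclideanSpace ℝ (Fin N))) (hΩopen : IsOpen Ω)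
    (hΩconn : IsConnected Ω)
    (hΩfin : volume Ω < ⊤)
    (F : Fin k → ℝ → ℝ)
    (hF0 : ∀ i, F i 0 = 0)
    (μ : Fin k → ℝ)
    (hF2 : ∀ i, ∀ t : ℝ, 0 ≤ t → F i t - t ^ 2 / 2 ≤ μ i)
    (i₀ : Fin k) (hi₀ : ∀ i, μ i ≤ μ i₀)
    (u : Fin k → EuclideanSpace ℝ (Fin N) → ℝ)
    (hu : ∀ i, ContDiff ℝ 1 (u i))
    (hgradint : ∀ i, IntegrableOn (fun x => ‖fderiv ℝ (u i) x‖ ^ 2) Ω)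
    (husqint : ∀ i, IntegrableOn (fun x => (u i x) ^ 2) Ω)
    (hFuint : ∀ i, IntegrableOn (fun x => F i (u i x)) Ω)
    (hpos : ∀ i, ∀ x ∈ Ω, 0 ≤ u i x)
    (hseg : ∀ i j, i ≠ j → ∀ x ∈ Ω, u i x * u j x = 0)
    (hmin : ∑ i, ∫ x in Ω,
        (1 / 2 * ‖fderiv ℝ (u i) x‖ ^ 2 + 1 / 2 * (u i x) ^ 2 - F i (u i x))
      = -(μ i₀) * (volume Ω).toReal) :
    ∃ j : Fin k, ∀ i : Fin k, i ≠ j → ∀ x ∈ Ω, u i x = 0 := by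
  have : Nonempty (Fin k) := ⟨i₀⟩
  obtain ⟨x₀, hx₀⟩ := hΩconn.nonempty
  set e : EuclideanSpace ℝ (Fin N) → ℝ := fun x =>
    ∑ i, (1 / 2 * ‖fderiv ℝ (u i) x‖ ^ 2 + 1 / 2 * (u i x) ^ 2 - F i (u i x)) + μ i₀
  have hdensity_int : ∀ i, IntegrableOn
      (fun x => 1 / 2 * ‖fderiv ℝ (u i) x‖ ^ 2 + 1 / 2 * (u i x) ^ 2 - F i (u i x)) Ω := fun i =>
    (((hgradint i).const_mul (1 / 2)).add ((husqint i).const_mul (1 / 2))).sub (hFuint i)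
  have hconst_int : IntegrableOn (fun _ => μ i₀) Ω := integrableOn_const hΩfin.ne
  have he_int : IntegrableOn e Ω :=
    (integrable_finsetSum _ fun i _ => hdensity_int i).add hconst_int
  have he_zero : ∫ x in Ω, e x = 0 := by
    rw [integral_add (integrable_finsetSum _ fun i _ => hdensity_int i) hconst_int,
      integral_finsetSum _ fun i _ => hdensity_int i, hmin, setIntegral_const, smul_eq_mul,
      Measure.real]
    ring
  have hgrad_le : ∀ i, ∀ x ∈ Ω, 1 / 2 * ‖fderiv ℝ (u i) x‖ ^ 2 ≤ e x := fun i x hx =>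
    le_sum_add_half_sq_sub_add_of_mul_eq_zero (a := fun j => 1 / 2 * ‖fderiv ℝ (u j) x‖ ^ 2)
      hF0 (fun j t ht => (hF2 j t ht).trans (hi₀ j)) (fun j => by positivity)
      (fun j => hpos j x hx) (fun j j' hjj' => hseg j j' hjj' x hx) i
  have hgrad : ∀ i, EqOn (fderiv ℝ (u i)) 0 Ω := fun i x hx => by
    have hcont : Continuous fun x => 1 / 2 * ‖fderiv ℝ (u i) x‖ ^ 2 :=
      continuous_const.mul (((hu i).continuous_fderiv one_ne_zero).norm.pow 2)
    simpa using eqOn_zero_of_le_of_setIntegral_eq_zero hΩopen hcont.continuousOn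
      (fun x _ => by positivity) (hgrad_le i) he_int he_zero hx
  have hconst : ∀ i, ∀ x ∈ Ω, u i x = u i x₀ := fun i x hx =>
    hΩopen.is_const_of_fderiv_eq_zero hΩconn.isPreconnected
      ((hu i).differentiable one_ne_zero).differentiableOn (hgrad i) hx hx₀
  obtain ⟨j, hj⟩ := exists_forall_ne_eq_zero_of_mul_eq_zero (v := fun i => u i x₀)
    fun i j hij => hseg i j hij x₀ hx₀
  exact ⟨j, fun i hij x hx => (hconst i x hx).trans (hj i hij)⟩

/-- Any segregated state achieving the global minimum `-μ* |Ω|` of the free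
energy over a nonempty connected open domain of finite measure has at most one
component not identically zero on `Ω`. -/
theorem stmt_1
    {N k : ℕ} (hN : 1 ≤ N) (hk : 2 ≤ k)
    (Ω : Set (EuclideanSpace ℝ (Fin N))) (hΩopen : IsOpen Ω)
    (hΩne : Ω.Nonempty) (hΩconn : IsConnected Ω)
    (hΩfin : volume Ω < ⊤)
    (F : Fin k → ℝ → ℝ) (hFcont : ∀ i, Continuous (F i))
    (hF0 : ∀ i, F i 0 = 0)
    (A : Fin k → ℝ) (hA : ∀ i, 0 < A i)
    (μ : Fin k → ℝ) (hμ : ∀ i, μ i = F i (A i) - (A i) ^ 2 / 2)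
    (hF2 : ∀ i, ∀ t : ℝ, 0 ≤ t → F i t - t ^ 2 / 2 ≤ μ i)
    (i₀ : Fin k) (hi₀ : ∀ i, μ i ≤ μ i₀)
    (u : Fin k → EuclideanSpace ℝ (Fin N) → ℝ)
    (hu : ∀ i, ContDiff ℝ 1 (u i))
    (hgradint : ∀ i, IntegrableOn (fun x => ‖fderiv ℝ (u i) x‖ ^ 2) Ω)
    (husqint : ∀ i, IntegrableOn (fun x => (u i x) ^ 2) Ω)
    (hFuint : ∀ i, IntegrableOn (fun x => F i (u i x)) Ω)
    (hpos : ∀ i, ∀ x ∈ Ω, 0 ≤ u i x)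
    (hseg : ∀ i j, i ≠ j → ∀ x ∈ Ω, u i x * u j x = 0)
    (hmin : ∑ i, ∫ x in Ω,
        (1 / 2 * ‖fderiv ℝ (u i) x‖ ^ 2 + 1 / 2 * (u i x) ^ 2 - F i (u i x))
      = -(μ i₀) * (volume Ω).toReal) :
    ∃ j : Fin k, ∀ i : Fin k, i ≠ j → ∀ x ∈ Ω, u i x = 0 :=
  stmt_1_general Ω hΩopen hΩconn hΩfin F hF0 μ hF2 i₀ hi₀ u hu hgradint husqint hFuint hpos hseg
    hmin
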